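/- Let E be a finite-dimensional real inner product space, ν ∈ (0,1), k ∈ ℕ, and let T : E → E be ν-averaged, i.e. T = (1−ν)·id + ν·G for some nonexpansive (1-Lipschitz) map G : E → E. Let Z ⊆ E be a compact set containing all fixed points of T, and assume T has at least one fixed point. Define the loss L(z) = ‖T(T^[k] z) − T^[k] z‖. Suppose z̄ ∈ Z attains the maximum of L over Z, and let z̄^∞ denote the limit of the sequence n ↦ T^[n] z̄ (which exists). Then for all z, w ∈ Z, |L(z) − L(w)| ≤ (1/√((k+1) ν (1−ν))) ‖z̄ − z̄^∞‖. -/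

import Mathlib

/-! For a fixed point `p` of `G`, the identity
`‖(1 - ν) a + ν b‖² = (1 - ν) ‖a‖² + ν ‖b‖² - ν (1 - ν) ‖a - b‖²` with `a = x - p`,
`b = G x - p` gives the Fejér inequality `‖T x - p‖² + ν (1 - ν) ‖T x - x‖² ≤ ‖x - p‖²`.
Summing it along the orbit of `z̄`, where the residuals `‖T^[n+1] z̄ - T^[n] z̄‖` are
nonincreasing because `T` is nonexpansive, gives `(k + 1) ν (1 - ν) L(z̄)² ≤ ‖z̄ - p‖²`.
By continuity of `T` the limit `z̄^∞` is a fixed point of `T`, hence of `G`, so `p = z̄^∞` is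
allowed; finally `0 ≤ L ≤ L(z̄)` on `Z` bounds `|L z - L w|` by `L(z̄)`. -/

open Function

section Averaged

variable {E : Type*} [NormedAddCommGroup E] [InnerProductSpace ℝ E]

lemma norm_one_sub_smul_add_smul_sq (ν : ℝ) (a b : E) :
    ‖(1 - ν) • a + ν • b‖ ^ 2 = (1 - ν) * ‖a‖ ^ 2 + ν * ‖b‖ ^ 2 - ν * (1 - ν) * ‖a - b‖ ^ 2 := by
  rw [norm_add_sq_real, norm_sub_sq_real, norm_smul, norm_smul, real_inner_smul_left,
    real_inner_smul_right, mul_pow, mul_pow, Real.norm_eq_abs, Real.norm_eq_abs, sq_abs, sq_abs]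
  ring

variable {ν : ℝ} {T G : E → E}

lemma averaged_sub_self (hTG : ∀ x, T x = (1 - ν) • x + ν • G x) (x : E) :
    T x - x = ν • (G x - x) := by
  rw [hTG]; module

lemma lipschitzWith_one_of_averaged (hν0 : 0 ≤ ν) (hν1 : ν ≤ 1) (hG : LipschitzWith 1 G)
    (hTG : ∀ x, T x = (1 - ν) • x + ν • G x) : LipschitzWith 1 T := by
  refine LipschitzWith.mk_one fun u v => ?_
  have hGuv : dist (G u) (G v) ≤ dist u v := by simpa using hG.dist_le_mul u v
  have hdecomp : T u - T v = (1 - ν) • (u - v) + ν • (G u - G v) := by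
    rw [hTG, hTG]; module
  simp only [dist_eq_norm] at hGuv ⊢
  calc ‖T u - T v‖ ≤ ‖(1 - ν) • (u - v)‖ + ‖ν • (G u - G v)‖ := hdecomp ▸ norm_add_le _ _
    _ = (1 - ν) * ‖u - v‖ + ν * ‖G u - G v‖ := by
      rw [norm_smul, norm_smul, Real.norm_of_nonneg hν0, Real.norm_of_nonneg (sub_nonneg.2 hν1)]
    _ ≤ ‖u - v‖ := by nlinarith

lemma Function.IsFixedPt.of_averaged (hν : ν ≠ 0) (hTG : ∀ x, T x = (1 - ν) • x + ν • G x)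
    {p : E} (hp : IsFixedPt T p) : IsFixedPt G p := by
  have h := averaged_sub_self hTG p
  rw [hp.eq, sub_self, eq_comm, smul_eq_zero] at h
  exact sub_eq_zero.1 (h.resolve_left hν)

lemma dist_sq_add_mul_dist_sq_le_of_averaged (hν0 : 0 ≤ ν) (hν1 : ν ≤ 1) (hG : LipschitzWith 1 G)
    (hTG : ∀ x, T x = (1 - ν) • x + ν • G x) {p : E} (hp : IsFixedPt G p) (x : E) :
    dist (T x) p ^ 2 + ν * (1 - ν) * dist (T x) x ^ 2 ≤ dist x p ^ 2 := by
  have hGx : ‖G x - p‖ ≤ ‖x - p‖ := by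
    simpa [dist_eq_norm, hp.eq] using hG.dist_le_mul x p
  have hTx : T x - p = (1 - ν) • (x - p) + ν • (G x - p) := by rw [hTG]; module
  have hres : ‖T x - x‖ ≤ ‖(x - p) - (G x - p)‖ := by
    rw [averaged_sub_self hTG, norm_smul, Real.norm_of_nonneg hν0, sub_sub_sub_cancel_right,
      norm_sub_rev]
    exact mul_le_of_le_one_left (norm_nonneg _) hν1
  simp only [dist_eq_norm]
  rw [hTx, norm_one_sub_smul_add_smul_sq]
  have hc : 0 ≤ ν * (1 - ν) := mul_nonneg hν0 (sub_nonneg.2 hν1)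
  nlinarith [mul_le_mul_of_nonneg_left (pow_le_pow_left₀ (norm_nonneg _) hres 2) hc,
    mul_le_mul_of_nonneg_left (pow_le_pow_left₀ (norm_nonneg _) hGx 2) hν0]

end Averaged

lemma succ_mul_dist_iterate_sq_add_le {X : Type*} [PseudoMetricSpace X] {T : X → X}
    (hT : LipschitzWith 1 T) {p : X} {c : ℝ} (hc : 0 ≤ c)
    (hfejer : ∀ x, dist (T x) p ^ 2 + c * dist (T x) x ^ 2 ≤ dist x p ^ 2) (z : X) (n : ℕ) :
    (n + 1) * c * dist (T (T^[n] z)) (T^[n] z) ^ 2 + dist (T^[n + 1] z) p ^ 2 ≤ dist z p ^ 2 := by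
  induction n with
  | zero => simpa [add_comm] using hfejer z
  | succ n ih =>
    have hmono : dist (T (T^[n + 1] z)) (T^[n + 1] z) ≤ dist (T (T^[n] z)) (T^[n] z) := by
      rw [iterate_succ_apply']
      simpa using hT.dist_le_mul (T (T^[n] z)) (T^[n] z)
    have hstep := hfejer (T^[n + 1] z)
    rw [iterate_succ_apply' T (n + 1)]
    push_cast
    nlinarith [mul_le_mul_of_nonneg_left (pow_le_pow_left₀ dist_nonneg hmono 2)
      (mul_nonneg (n.cast_add_one_pos (α := ℝ)).le hc)]

lemma le_one_div_sqrt_mul_of_mul_sq_le {c x N : ℝ} (hc : 0 < c) (hx : 0 ≤ x) (hN : 0 ≤ N)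
    (h : c * x ^ 2 ≤ N ^ 2) : x ≤ 1 / Real.sqrt c * N := by
  have hsc : 0 < Real.sqrt c := Real.sqrt_pos.2 hc
  rw [one_div_mul_eq_div, le_div_iff₀ hsc]
  refine (pow_le_pow_iff_left₀ (by positivity) hN two_ne_zero).1 ?_
  rw [mul_pow, Real.sq_sqrt hc.le]
  linarith

theorem stmt_6_general {E : Type*} [NormedAddCommGroup E] [InnerProductSpace ℝ E]
    (ν : ℝ) (hν0 : 0 < ν) (hν1 : ν < 1) (k : ℕ) (T G : E → E)
    (hG : LipschitzWith 1 G) (hTG : ∀ x, T x = (1 - ν) • x + ν • G x)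
    (Z : Set E)
    (L : E → ℝ) (hL : ∀ z, L z = ‖T (T^[k] z) - T^[k] z‖)
    (zbar : E) (hmax : ∀ z ∈ Z, L z ≤ L zbar)
    (zinf : E) (hlim : Filter.Tendsto (fun n => T^[n] zbar) Filter.atTop (nhds zinf))
    (z w : E) (hz : z ∈ Z) (hw : w ∈ Z) :
    |L z - L w| ≤ (1 / Real.sqrt ((k + 1 : ℝ) * ν * (1 - ν))) * ‖zbar - zinf‖ := by
  have hT := lipschitzWith_one_of_averaged hν0.le hν1.le hG hTG
  have hTfix : IsFixedPt T zinf := isFixedPt_of_tendsto_iterate hlim hT.continuous.continuousAt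
  have hfejer := dist_sq_add_mul_dist_sq_le_of_averaged hν0.le hν1.le hG hTG
    (hTfix.of_averaged hν0.ne' hTG)
  have hsum := succ_mul_dist_iterate_sq_add_le hT (mul_nonneg hν0.le (sub_nonneg.2 hν1.le))
    hfejer zbar k
  simp only [dist_eq_norm, ← hL] at hsum
  have hL_nonneg : ∀ x, 0 ≤ L x := fun x => hL x ▸ norm_nonneg _
  calc |L z - L w| ≤ L zbar :=
        abs_sub_le_of_nonneg_of_le (hL_nonneg z) (hmax z hz) (hL_nonneg w) (hmax w hw)
    _ ≤ _ := le_one_div_sqrt_mul_of_mul_sq_le (by have := sub_pos.2 hν1; positivity)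
        (hL_nonneg zbar) (norm_nonneg _) (by nlinarith [sq_nonneg ‖T^[k + 1] zbar - zinf‖])

/-- non-strongly-convex case (new version): Lipschitz-like bound on the
fixed-point-residual loss via a maximizer over the compact set `Z`. -/
theorem stmt_6 {E : Type*} [NormedAddCommGroup E] [InnerProductSpace ℝ E]
    [FiniteDimensional ℝ E]
    (ν : ℝ) (hν0 : 0 < ν) (hν1 : ν < 1) (k : ℕ) (T G : E → E)
    (hG : LipschitzWith 1 G) (hTG : ∀ x, T x = (1 - ν) • x + ν • G x)
    (hfix : ∃ z, T z = z)
    (Z : Set E) (hZc : IsCompact Z) (hZfix : ∀ z, T z = z → z ∈ Z)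
    (L : E → ℝ) (hL : ∀ z, L z = ‖T (T^[k] z) - T^[k] z‖)
    (zbar : E) (hzbar : zbar ∈ Z) (hmax : ∀ z ∈ Z, L z ≤ L zbar)
    (zinf : E) (hlim : Filter.Tendsto (fun n => T^[n] zbar) Filter.atTop (nhds zinf))
    (z w : E) (hz : z ∈ Z) (hw : w ∈ Z) :
    |L z - L w| ≤ (1 / Real.sqrt ((k + 1 : ℝ) * ν * (1 - ν))) * ‖zbar - zinf‖ :=
  stmt_6_general ν hν0 hν1 k T G hG hTG Z L hL zbar hmax zinf hlim z w hz hw
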